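/- arXiv:2403.16871 — 2 statements merged into one kernel-verified Lean document; each statement's English description precedes it below -/
import Mathlib

section
/- Let s₁,…,s_n ∈ ℝ be calibration scores with positive weights w₁,…,w_n and W = Σᵢ wᵢ. For w > 0, the reweighted calibration distribution F̂(w) assigns probability wᵢ/(W + w) to the point sᵢ and probability w/(W + w) to +∞. For α ∈ (0,1), define the quantile Q_{1−α}(F̂(w)) as the infimum over all thresholds q ∈ ℝ ∪ {+∞} such that the total F̂(w)-mass of points ≤ q is at least 1 − α. Then for all 0 < w ≤ w', Q_{1−α}(F̂(w)) ≤ Q_{1−α}(F̂(w')). -/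
open Finset Classical

/-- Total `F̂(w)`-mass of points `≤ q`: the sum of the reweighted calibration
weights of scores `sᵢ ≤ q`, plus the test-atom mass `w/(W+w)` when `q = +∞`. -/
noncomputable def rwMass {n : ℕ} (sc wts : Fin n → ℝ) (W w : ℝ) (q : EReal) : ℝ :=
  (∑ i, if (sc i : EReal) ≤ q then wts i / (W + w) else 0)
    + (if q = ⊤ then w / (W + w) else 0)

/-- The `(1-α)`-quantile of the reweighted calibration distribution `F̂(w)`:
the infimum of all thresholds `q ∈ ℝ ∪ {+∞}` whose `F̂(w)`-mass is at least `1 - α`. -/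
noncomputable def rwQuantile {n : ℕ} (sc wts : Fin n → ℝ) (W α w : ℝ) : EReal :=
  sInf {q : EReal | 1 - α ≤ rwMass sc wts W w q}

/-! Raising the test weight from `w` to `w'` only enlarges the normaliser `W + w`, so every
finite threshold loses mass, while `+∞` keeps mass `1`. Hence every threshold admissible for
`F̂(w')` is admissible for `F̂(w)`, and the infimum over the smaller set is larger. -/

section rwMass

variable {n : ℕ} (sc wts : Fin n → ℝ) (W : ℝ) {w w' : ℝ}

theorem rwMass_eq_div (w : ℝ) (q : EReal) :
    rwMass sc wts W w q =
      ((∑ i, if (sc i : EReal) ≤ q then wts i else 0) + if q = ⊤ then w else 0) / (W + w) := by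
  simp only [rwMass, add_div, sum_div, ite_div, zero_div]

variable {sc wts W}

theorem rwMass_top (hW : W = ∑ i, wts i) (hw : W + w ≠ 0) : rwMass sc wts W w ⊤ = 1 := by
  simp only [rwMass_eq_div, le_top, if_true, ← hW]
  exact div_self hw

theorem rwMass_le_of_ne_top (hwts : ∀ i, 0 ≤ wts i) {q : EReal} (hq : q ≠ ⊤)
    (hpos : 0 < W + w) (hle : w ≤ w') : rwMass sc wts W w' q ≤ rwMass sc wts W w q := by
  simp only [rwMass_eq_div, if_neg hq, add_zero]
  exact div_le_div_of_nonneg_left (sum_nonneg fun i _ => by split <;> simp [hwts i]) hpos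
    (by linarith)

theorem rwMass_le_of_le (hwts : ∀ i, 0 ≤ wts i) (hW : W = ∑ i, wts i) (hpos : 0 < W + w)
    (hle : w ≤ w') (q : EReal) : rwMass sc wts W w' q ≤ rwMass sc wts W w q := by
  rcases eq_or_ne q ⊤ with rfl | hq
  · rw [rwMass_top hW hpos.ne', rwMass_top hW (by linarith)]
  · exact rwMass_le_of_ne_top hwts hq hpos hle

end rwMass

theorem rwQuantile_mono_general
    {n : ℕ} (sc wts : Fin n → ℝ) (hw : ∀ i, 0 < wts i)
    (W : ℝ) (hW : W = ∑ i, wts i)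
    (α : ℝ)
    (w w' : ℝ) (h0 : 0 < w) (hle : w ≤ w') :
    rwQuantile sc wts W α w ≤ rwQuantile sc wts W α w' := by
  have hwts : ∀ i, 0 ≤ wts i := fun i => (hw i).le
  have hpos : 0 < W + w := by
    have : 0 ≤ W := hW ▸ sum_nonneg fun i _ => hwts i
    linarith
  exact sInf_le_sInf fun q hq => le_trans hq (rwMass_le_of_le hwts hW hpos hle q)

/-- Monotonicity of the weighted conformal quantile in the test-point weight. -/
theorem rwQuantile_mono
    {n : ℕ} (sc wts : Fin n → ℝ) (hw : ∀ i, 0 < wts i)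
    (W : ℝ) (hW : W = ∑ i, wts i)
    (α : ℝ) (hα : α ∈ Set.Ioo (0 : ℝ) 1)
    (w w' : ℝ) (h0 : 0 < w) (hle : w ≤ w') :
    rwQuantile sc wts W α w ≤ rwQuantile sc wts W α w' :=
  rwQuantile_mono_general sc wts hw W hW α w w' h0 hle
end

section
/- Let s₁,…,s_n ∈ ℝ be calibration scores with positive weights w₁,…,w_n, W = Σᵢ wᵢ, α ∈ (0,1), and let F̂(·) and Q_{1−α}(F̂(·)) be the reweighted calibration distribution and its (1−α)-quantile. Let 𝒴₀ be a set of candidate outputs, S : 𝒴₀ → ℝ a score function, and w : 𝒴₀ → (0, ∞) a density-ratio function, and define the joint prediction region C = { y ∈ 𝒴₀ : S(y) ≤ Q_{1−α}(F̂(w(y))) }. Let 𝒴 ⊆ C be any subset such that w attains a maximum w⊤ on 𝒴, i.e., w⊤ = max_{y ∈ 𝒴} w(y). Then 𝒴 ⊆ { y ∈ 𝒴₀ : S(y) ≤ Q_{1−α}(F̂(w⊤)) }; that is, the max-DR region constructed with the single weight w⊤ contains 𝒴. -/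
open Finset Classical

lemma rwMass_anti {n : ℕ} (sc wts : Fin n → ℝ) (hw : ∀ i, 0 < wts i)
    (W : ℝ) (hW : W = ∑ i, wts i) {w w' : ℝ} (hw0 : 0 < w) (hww : w ≤ w')
    (q : EReal) : rwMass sc wts W w' q ≤ rwMass sc wts W w q := by
  have hW0 : 0 ≤ W := by
    rw [hW]; exact Finset.sum_nonneg fun i _ => (hw i).le
  have h1 : 0 < W + w := by linarith
  have h2 : 0 < W + w' := by linarith
  by_cases hq : q = ⊤
  · have key : ∀ v : ℝ, 0 < W + v →
        rwMass sc wts W v ⊤ = 1 := by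
      intro v hv
      simp only [rwMass, if_pos rfl, le_top, if_pos trivial]
      rw [← Finset.sum_div, ← hW]
      field_simp
    rw [hq, key w h1, key w' h2]
  · simp only [rwMass, if_neg hq, add_zero]
    apply Finset.sum_le_sum
    intro i _
    by_cases h : (sc i : EReal) ≤ q
    · simp only [if_pos h]
      gcongr
      exact (hw i).le
    · simp [if_neg h]

/-- Proposition 2 (Max-DR region): any subset `𝒴` of the joint prediction
region on which the density ratio attains a maximum `w⊤` is contained in the
max-DR region built from the single weight `w⊤`. -/
theorem maxDR_region_contains_subset
    {n : ℕ} (sc wts : Fin n → ℝ) (hw : ∀ i, 0 < wts i)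
    (W : ℝ) (hW : W = ∑ i, wts i)
    (α : ℝ) (hα : α ∈ Set.Ioo (0 : ℝ) 1)
    {𝒴₀ : Type*} (S : 𝒴₀ → ℝ) (w : 𝒴₀ → ℝ) (hwpos : ∀ y, 0 < w y)
    (C : Set 𝒴₀)
    (hC : C = {y : 𝒴₀ | (S y : EReal) ≤ rwQuantile sc wts W α (w y)})
    (𝒴 : Set 𝒴₀) (h𝒴 : 𝒴 ⊆ C)
    (wtop : ℝ) (hattain : ∃ y ∈ 𝒴, w y = wtop)
    (hmax : ∀ y ∈ 𝒴, w y ≤ wtop) :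
    𝒴 ⊆ {y : 𝒴₀ | (S y : EReal) ≤ rwQuantile sc wts W α wtop} := by
  intro y hy
  have hyC : (S y : EReal) ≤ rwQuantile sc wts W α (w y) := by
    have := h𝒴 hy; rw [hC] at this; exact this
  refine le_trans hyC ?_
  apply sInf_le_sInf
  intro q hq
  exact le_trans hq (rwMass_anti sc wts hw W hW (hwpos y) (hmax y hy) q)
end
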